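/- For any collection of jointly distributed finite random variables X', S, U_1, ..., U_k, the sum of pairwise mutual informations satisfies: sum_{j=1}^k I(X'; U_j) ≤ I(X'; S) + H(U_1,...,U_k | S) + C(U_1,...,U_k), where C denotes total correlation C(U_1,...,U_k) = sum_j H(U_j) - H(U_1,...,U_k). -/

import Mathlib

open Real
open scoped Classical BigOperators

/-- Push-forward of a (sub)probability mass function `p` on `Ω` along `f : Ω → β`:
the distribution of the random variable `f`. -/
noncomputable def pmap {Ω β : Type*} [Fintype Ω] (f : Ω → β) (p : Ω → ℝ) : β → ℝ :=
  fun b => ∑ a, if f a = b then p a else 0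

/-- Shannon entropy (natural log) of a mass function on a finite type. -/
noncomputable def ent {α : Type*} [Fintype α] (p : α → ℝ) : ℝ :=
  -∑ a, p a * Real.log (p a)

/-- `p` is a probability mass function. -/
def IsPMF {α : Type*} [Fintype α] (p : α → ℝ) : Prop :=
  (∀ a, 0 ≤ p a) ∧ ∑ a, p a = 1

/-- Entropy `H(X)` of the random variable `X` under joint distribution `p` on `Ω`. -/
noncomputable def H {Ω α : Type*} [Fintype Ω] [Fintype α] (X : Ω → α) (p : Ω → ℝ) : ℝ :=
  ent (pmap X p)

/-- Conditional entropy `H(X | Y) = H(X, Y) - H(Y)`. -/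
noncomputable def condH {Ω α β : Type*} [Fintype Ω] [Fintype α] [Fintype β]
    (X : Ω → α) (Y : Ω → β) (p : Ω → ℝ) : ℝ :=
  ent (pmap (fun ω => (X ω, Y ω)) p) - ent (pmap Y p)

/-- Mutual information `I(X;Y) = H(X) + H(Y) - H(X,Y)`. -/
noncomputable def mi {Ω α β : Type*} [Fintype Ω] [Fintype α] [Fintype β]
    (X : Ω → α) (Y : Ω → β) (p : Ω → ℝ) : ℝ :=
  ent (pmap X p) + ent (pmap Y p) - ent (pmap (fun ω => (X ω, Y ω)) p)

/-- Kullback–Leibler divergence `KL(q ‖ p)` on a finite type. -/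
noncomputable def KL {α : Type*} [Fintype α] (q p : α → ℝ) : ℝ :=
  ∑ a, q a * Real.log (q a / p a)


/-!
Both entropy inequalities behind the bound are instances of Gibbs' inequality
`H(X) ≤ -E log r(X)` for a sub-probability `r`. With `r = P(X,U) P(U,S) / P(U)` it gives
`I(X';S | U) ≥ 0`, hence `I(X';U) ≤ I(X';U,S) ≤ I(X';S) + H(U | S)`. With
`r = P(X) ∏ⱼ P(Uⱼ | X)` it gives `H(U | X) ≤ ∑ⱼ H(Uⱼ | X)`, i.e.
`∑ⱼ I(X';Uⱼ) ≤ I(X';U) + C(U)`. Adding the two proves the claim.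
-/

section pmap

variable {Ω α β : Type*} [Fintype Ω]

lemma pmap_nonneg {p : Ω → ℝ} (hp : ∀ ω, 0 ≤ p ω) (f : Ω → α) (a : α) : 0 ≤ pmap f p a :=
  Finset.sum_nonneg fun ω _ => by split <;> simp [hp ω]

lemma pmap_le_pmap_comp {p : Ω → ℝ} (hp : ∀ ω, 0 ≤ p ω) (f : Ω → α) (g : α → β) (a : α) :
    pmap f p a ≤ pmap (g ∘ f) p (g a) :=
  Finset.sum_le_sum fun ω _ => by
    split_ifs with h h'
    · exact le_rfl
    · exact absurd (congrArg g h) h'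
    · exact hp ω
    · exact le_rfl

lemma le_pmap_apply {p : Ω → ℝ} (hp : ∀ ω, 0 ≤ p ω) (f : Ω → α) (ω : Ω) :
    p ω ≤ pmap f p (f ω) := by
  have h := pmap_le_pmap_comp hp id f ω
  rwa [show pmap id p ω = p ω by simp [pmap]] at h

lemma pmap_apply_pos {p : Ω → ℝ} (hp : ∀ ω, 0 ≤ p ω) (f : Ω → α) {ω : Ω} (hω : 0 < p ω) :
    0 < pmap f p (f ω) :=
  hω.trans_le (le_pmap_apply hp f ω)

lemma sum_pmap_prod_mk_left [Fintype α] (f : Ω → α) (g : Ω → β) (p : Ω → ℝ) (b : β) :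
    ∑ a, pmap (fun ω => (f ω, g ω)) p (a, b) = pmap g p b := by
  simp only [pmap, Prod.ext_iff, ite_and]
  rw [Finset.sum_comm]
  simp

lemma sum_pmap_prod_mk_right [Fintype β] (f : Ω → α) (g : Ω → β) (p : Ω → ℝ) (a : α) :
    ∑ b, pmap (fun ω => (f ω, g ω)) p (a, b) = pmap f p a := by
  simp only [pmap, Prod.ext_iff, ite_and]
  rw [Finset.sum_comm]
  simp

variable [Fintype α]

lemma sum_pmap_mul (f : Ω → α) (p : Ω → ℝ) (g : α → ℝ) :
    ∑ a, pmap f p a * g a = ∑ ω, p ω * g (f ω) := by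
  simp only [pmap, Finset.sum_mul, ite_mul, zero_mul]
  rw [Finset.sum_comm]
  simp

lemma sum_pmap (f : Ω → α) (p : Ω → ℝ) : ∑ a, pmap f p a = ∑ ω, p ω := by
  simpa using sum_pmap_mul f p 1

end pmap

section entropy

variable {Ω α β γ : Type*} [Fintype Ω] [Fintype α] [Fintype β] [Fintype γ]

lemma mi_eq (X : Ω → α) (Y : Ω → β) (p : Ω → ℝ) :
    mi X Y p = H X p + H Y p - H (fun ω => (X ω, Y ω)) p := rfl

lemma condH_eq (X : Ω → α) (Y : Ω → β) (p : Ω → ℝ) :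
    condH X Y p = H (fun ω => (X ω, Y ω)) p - H Y p := rfl

lemma H_eq_neg_sum (X : Ω → α) (p : Ω → ℝ) :
    H X p = -∑ ω, p ω * log (pmap X p (X ω)) :=
  congrArg Neg.neg (sum_pmap_mul X p fun a => log (pmap X p a))

lemma H_comp_le {p : Ω → ℝ} (hp : ∀ ω, 0 ≤ p ω) (X : Ω → α) (g : α → β) :
    H (g ∘ X) p ≤ H X p := by
  rw [H_eq_neg_sum, H_eq_neg_sum]
  refine neg_le_neg (Finset.sum_le_sum fun ω _ => ?_)
  rcases (hp ω).eq_or_lt with h | h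
  · simp [← h]
  · exact mul_le_mul_of_nonneg_left
      (log_le_log (pmap_apply_pos hp X h) (pmap_le_pmap_comp hp X g (X ω))) h.le

lemma H_le_neg_sum_mul_log {p : Ω → ℝ} (hp : IsPMF p) (X : Ω → α) {r : α → ℝ}
    (hr : ∀ a, 0 ≤ r a) (hr1 : ∑ a, r a ≤ 1) (hpos : ∀ ω, 0 < p ω → 0 < r (X ω)) :
    H X p ≤ -∑ ω, p ω * log (r (X ω)) := by
  set q := pmap X p
  have pointwise : ∀ ω, p ω * log (r (X ω)) - p ω * log (q (X ω)) ≤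
      p ω * (r (X ω) / q (X ω)) - p ω := by
    intro ω
    rcases (hp.1 ω).eq_or_lt with h | h
    · simp [← h]
    · have hq := pmap_apply_pos hp.1 X h
      rw [← mul_sub, ← log_div (hpos ω h).ne' hq.ne', ← mul_sub_one]
      exact mul_le_mul_of_nonneg_left (log_le_sub_one_of_pos (div_pos (hpos ω h) hq)) h.le
  have hratio : ∑ ω, p ω * (r (X ω) / q (X ω)) ≤ 1 := by
    rw [← sum_pmap_mul X p fun a => r a / q a]
    refine le_trans (Finset.sum_le_sum fun a _ => ?_) hr1
    rcases (pmap_nonneg hp.1 X a).eq_or_lt with h | h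
    · simp [← h, hr a]
    · rw [mul_div_cancel₀ _ h.ne']
  have := Finset.sum_le_sum fun ω (_ : ω ∈ Finset.univ) => pointwise ω
  rw [Finset.sum_sub_distrib, Finset.sum_sub_distrib, hp.2] at this
  rw [H_eq_neg_sum]
  linarith

lemma H_triple_add_H_le (X : Ω → α) (Y : Ω → β) (Z : Ω → γ) {p : Ω → ℝ} (hp : IsPMF p) :
    H (fun ω => (X ω, Y ω, Z ω)) p + H Y p ≤
      H (fun ω => (X ω, Y ω)) p + H (fun ω => (Y ω, Z ω)) p := by
  set qY := pmap Y p
  set qXY := pmap (fun ω => (X ω, Y ω)) p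
  set qYZ := pmap (fun ω => (Y ω, Z ω)) p
  set r : α × β × γ → ℝ := fun v => qXY (v.1, v.2.1) * qYZ (v.2.1, v.2.2) / qY v.2.1
  have hr : ∀ v, 0 ≤ r v := fun v => div_nonneg
    (mul_nonneg (pmap_nonneg hp.1 _ _) (pmap_nonneg hp.1 _ _)) (pmap_nonneg hp.1 _ _)
  have hr1 : ∑ v, r v ≤ 1 := by
    have hXY : ∀ b, ∑ a, qXY (a, b) = qY b := sum_pmap_prod_mk_left X Y p
    have hYZ : ∀ b, ∑ c, qYZ (b, c) = qY b := sum_pmap_prod_mk_right Y Z p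
    have hfiber : ∀ b, ∑ a, ∑ c, r (a, b, c) ≤ qY b := by
      intro b
      simp only [r, ← Finset.sum_div, ← Finset.mul_sum, ← Finset.sum_mul, hXY, hYZ]
      exact div_le_of_le_mul₀ (pmap_nonneg hp.1 _ _) (pmap_nonneg hp.1 _ _) le_rfl
    calc ∑ v, r v = ∑ b, ∑ a, ∑ c, r (a, b, c) := by
          rw [Fintype.sum_prod_type, Finset.sum_comm]
          simp only [Fintype.sum_prod_type]
          exact Finset.sum_congr rfl fun _ _ => Finset.sum_comm
      _ ≤ ∑ b, qY b := Finset.sum_le_sum fun b _ => hfiber b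
      _ = 1 := (sum_pmap Y p).trans hp.2
  have hpos : ∀ ω, 0 < p ω → 0 < r (X ω, Y ω, Z ω) := fun ω h => div_pos
    (mul_pos (pmap_apply_pos hp.1 (fun ω => (X ω, Y ω)) h)
      (pmap_apply_pos hp.1 (fun ω => (Y ω, Z ω)) h)) (pmap_apply_pos hp.1 Y h)
  have hlog : ∀ ω, p ω * log (r (X ω, Y ω, Z ω)) = p ω * log (qXY (X ω, Y ω)) +
      p ω * log (qYZ (Y ω, Z ω)) - p ω * log (qY (Y ω)) := by
    intro ω
    rcases (hp.1 ω).eq_or_lt with h | h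
    · simp [← h]
    · have hXY := pmap_apply_pos hp.1 (fun ω => (X ω, Y ω)) h
      have hYZ := pmap_apply_pos hp.1 (fun ω => (Y ω, Z ω)) h
      rw [log_div (mul_pos hXY hYZ).ne' (pmap_apply_pos hp.1 Y h).ne', log_mul hXY.ne' hYZ.ne']
      ring
  have := H_le_neg_sum_mul_log hp (fun ω => (X ω, Y ω, Z ω)) hr hr1 hpos
  rw [Finset.sum_congr rfl fun ω _ => hlog ω, Finset.sum_sub_distrib,
    Finset.sum_add_distrib] at this
  rw [H_eq_neg_sum Y, H_eq_neg_sum (fun ω => (X ω, Y ω)), H_eq_neg_sum (fun ω => (Y ω, Z ω))]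
  linarith

lemma H_pair_sub_H_le_sum {ι : Type*} [Fintype ι] [DecidableEq ι] {U : ι → Type*}
    [∀ i, Fintype (U i)] (X : Ω → α) (V : Ω → ∀ i, U i) {p : Ω → ℝ} (hp : IsPMF p) :
    H (fun ω => (X ω, V ω)) p - H X p ≤ ∑ i, (H (fun ω => (X ω, V ω i)) p - H X p) := by
  set qX := pmap X p
  set q : ∀ i, α × U i → ℝ := fun i => pmap (fun ω => (X ω, V ω i)) p
  set r : α × (∀ i, U i) → ℝ := fun v => qX v.1 * ∏ i, (q i (v.1, v.2 i) / qX v.1)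
  have hr : ∀ v, 0 ≤ r v := fun v => mul_nonneg (pmap_nonneg hp.1 _ _)
    (Finset.prod_nonneg fun i _ => div_nonneg (pmap_nonneg hp.1 _ _) (pmap_nonneg hp.1 _ _))
  have hr1 : ∑ v, r v ≤ 1 := by
    have hmarg : ∀ i a, ∑ b, q i (a, b) = qX a :=
      fun i => sum_pmap_prod_mk_right X (fun ω => V ω i) p
    have hfiber : ∀ a, ∑ u, r (a, u) ≤ qX a := by
      intro a
      simp only [r, ← Finset.mul_sum]
      rw [← Fintype.prod_sum fun i b => q i (a, b) / qX a]
      simp only [← Finset.sum_div, hmarg]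
      rcases (pmap_nonneg hp.1 X a).eq_or_lt with h | h
      · simp [qX, ← h]
      · simp [qX, div_self h.ne']
    calc ∑ v, r v = ∑ a, ∑ u, r (a, u) := Fintype.sum_prod_type _
      _ ≤ ∑ a, qX a := Finset.sum_le_sum fun a _ => hfiber a
      _ = 1 := (sum_pmap X p).trans hp.2
  have hpos : ∀ ω, 0 < p ω → 0 < r (X ω, V ω) := fun ω h =>
    mul_pos (pmap_apply_pos hp.1 X h) (Finset.prod_pos fun i _ =>
      div_pos (pmap_apply_pos hp.1 (fun ω => (X ω, V ω i)) h) (pmap_apply_pos hp.1 X h))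
  have hlog : ∀ ω, p ω * log (r (X ω, V ω)) = p ω * log (qX (X ω)) +
      ∑ i, (p ω * log (q i (X ω, V ω i)) - p ω * log (qX (X ω))) := by
    intro ω
    rcases (hp.1 ω).eq_or_lt with h | h
    · simp [← h]
    · have hX := pmap_apply_pos hp.1 X h
      have hXV : ∀ i, 0 < q i (X ω, V ω i) :=
        fun i => pmap_apply_pos hp.1 (fun ω => (X ω, V ω i)) h
      have hne : ∀ i ∈ Finset.univ, q i (X ω, V ω i) / qX (X ω) ≠ 0 :=
        fun i _ => (div_pos (hXV i) hX).ne'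
      simp only [r]
      rw [log_mul hX.ne' (Finset.prod_ne_zero_iff.mpr hne), log_prod hne, mul_add,
        Finset.mul_sum]
      congr 1
      exact Finset.sum_congr rfl fun i _ => by rw [log_div (hXV i).ne' hX.ne', mul_sub]
  have := H_le_neg_sum_mul_log hp (fun ω => (X ω, V ω)) hr hr1 hpos
  rw [Finset.sum_congr rfl fun ω _ => hlog ω, Finset.sum_add_distrib, Finset.sum_comm] at this
  simp only [Finset.sum_sub_distrib] at this
  simp only [H_eq_neg_sum X, H_eq_neg_sum (fun ω => (X ω, V ω _)), Finset.sum_sub_distrib,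
    Finset.sum_neg_distrib]
  linarith

end entropy

section mutualInformation

variable {Ω α β γ : Type*} [Fintype Ω] [Fintype α] [Fintype β] [Fintype γ]

lemma mi_le_mi_add_condH (X : Ω → α) (Y : Ω → β) (Z : Ω → γ) {p : Ω → ℝ} (hp : IsPMF p) :
    mi X Y p ≤ mi X Z p + condH Y Z p := by
  have hmono : H (fun ω => (X ω, Z ω)) p ≤ H (fun ω => (X ω, Y ω, Z ω)) p :=
    H_comp_le hp.1 (fun ω => (X ω, Y ω, Z ω)) fun v => (v.1, v.2.2)
  have hsub := H_triple_add_H_le X Y Z hp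
  rw [mi_eq, mi_eq, condH_eq]
  linarith

lemma sum_mi_le_mi_add_totalCorrelation {ι : Type*} [Fintype ι] [DecidableEq ι]
    {U : ι → Type*} [∀ i, Fintype (U i)] (X : Ω → α) (V : Ω → ∀ i, U i) {p : Ω → ℝ}
    (hp : IsPMF p) :
    ∑ i, mi X (fun ω => V ω i) p ≤ mi X V p + (∑ i, H (fun ω => V ω i) p - H V p) := by
  have hsub := H_pair_sub_H_le_sum X V hp
  simp only [mi_eq, Finset.sum_sub_distrib, Finset.sum_add_distrib] at hsub ⊢
  linarith

end mutualInformation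

/-- for jointly distributed `X'`, `S`, `U_1, …, U_k`,
`∑ j, I(X';U_j) ≤ I(X';S) + H(U_1,…,U_k | S) + C(U_1,…,U_k)`,
where `C(U_1,…,U_k) = ∑ j H(U_j) - H(U_1,…,U_k)` is the total correlation. -/
theorem stmt2 {Ω A S : Type*} {k : ℕ} {U : Fin k → Type*}
    [Fintype Ω] [Fintype A] [Fintype S] [∀ j, Fintype (U j)]
    (X' : Ω → A) (Sv : Ω → S) (Uv : Ω → ∀ j, U j) (p : Ω → ℝ) (hp : IsPMF p) :
    ∑ j, mi X' (fun ω => Uv ω j) p ≤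
      mi X' Sv p + condH Uv Sv p +
        ((∑ j, H (fun ω => Uv ω j) p) - H Uv p) := by
  have hsum := sum_mi_le_mi_add_totalCorrelation X' Uv hp
  have hcond := mi_le_mi_add_condH X' Uv Sv hp
  linarith
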